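/- arXiv:1810.09575 — 3 statements merged into one kernel-verified Lean document; each statement's English description precedes it below -/
import Mathlib

section
/- For every α ∈ Z_X(S), H_α = S_Z. For every logical X operator λ, G_λ = Z_Z(S), and Z_Z(S) equals the subgroup of (Finset Q, Δ) generated by S_Z ∪ {λ}. (Lemma A0.) -/
open Finset
open scoped symmDiff Matrix

namespace CC

variable {Q : Type*} [Fintype Q] [DecidableEq Q]

/-- A subgroup of the abelian group `(Finset Q, ∆)`. -/
def IsSubgroup (S : Set (Finset Q)) : Prop :=
  ∅ ∈ S ∧ ∀ a ∈ S, ∀ b ∈ S, a ∆ b ∈ S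

/-- The subgroup of `(Finset Q, ∆)` generated by a set. -/
def closure (T : Set (Finset Q)) : Set (Finset Q) :=
  ⋂₀ {S : Set (Finset Q) | IsSubgroup S ∧ T ⊆ S}

/-- A CSS stabilizer code on the qubits `Q`. -/
structure CSS (Q : Type*) [Fintype Q] [DecidableEq Q] where
  SX : Set (Finset Q)
  SZ : Set (Finset Q)
  hSX : IsSubgroup SX
  hSZ : IsSubgroup SZ
  comm : ∀ a ∈ SZ, ∀ b ∈ SX, 2 ∣ (a ∩ b).card

def ZX (C : CSS Q) : Set (Finset Q) := {γ | ∀ f ∈ C.SZ, 2 ∣ (γ ∩ f).card}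

def ZZ (C : CSS Q) : Set (Finset Q) := {z | ∀ c ∈ C.SX, 2 ∣ (z ∩ c).card}

/-- Duality assumption. -/
def Dual (C : CSS Q) : Prop :=
  C.SZ = {z | ∀ γ ∈ ZX C, 2 ∣ (z ∩ γ).card} ∧
  C.SX = {c | ∀ z ∈ ZZ C, 2 ∣ (c ∩ z).card}

def LogicalX (C : CSS Q) (l : Finset Q) : Prop := l ∈ ZX C ∧ l ∉ C.SX

def LogicalZ (C : CSS Q) (l : Finset Q) : Prop := l ∈ ZZ C ∧ l ∉ C.SZ

/-- Single-logical-qubit assumption. -/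
def SingleQubit (C : CSS Q) : Prop :=
  (ZX C ≠ C.SX ∧ ∀ l l', LogicalX C l → LogicalX C l' → l ∆ l' ∈ C.SX) ∧
  (ZZ C ≠ C.SZ ∧ ∀ l l', LogicalZ C l → LogicalZ C l' → l ∆ l' ∈ C.SZ)

/-- Intersection axiom. -/
def Inter (C : CSS Q) : Prop :=
  ZZ C = {x | ∃ α ∈ ZX C, ∃ β ∈ ZX C, x = α ∩ β}

def G (C : CSS Q) (α : Finset Q) : Set (Finset Q) :=
  closure (C.SZ ∪ {x | ∃ β ∈ ZX C, x = α ∩ β})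

def H (C : CSS Q) (α : Finset Q) : Set (Finset Q) :=
  closure (C.SZ ∪ {x | ∃ β ∈ C.SX, x = α ∩ β})

def Zof (K : Set (Finset Q)) : Set (Finset Q) := {γ | ∀ h ∈ K, 2 ∣ (γ ∩ h).card}

def Tolerable (C : CSS Q) (α : Finset Q) : Prop := ∀ z ∈ G C α, ¬ LogicalZ C z

def g (b : Q → ℤ) (s : Finset Q) : ℤ := ∑ q ∈ s, b q

/-- T-invariance assumption. -/
def TInv (C : CSS Q) (b : Q → ℤ) : Prop :=
  (∀ β ∈ C.SX, (8 : ℤ) ∣ g b β) ∧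
  (∀ β ∈ C.SX, ∀ γ ∈ ZX C, (8 : ℤ) ∣ (g b β - 2 * g b (γ ∩ β)))

def E (C : CSS Q) (b : Q → ℤ) (α : Finset Q) : Set (Finset Q) :=
  {z | ∀ γ ∈ Zof (G C α), g b (γ ∩ α) ≡ 2 * ((z ∩ γ).card : ℤ) [ZMOD 4]}

/- Quantum setting -/

abbrev M (Q : Type*) [Fintype Q] [DecidableEq Q] :=
  Matrix (Q → ZMod 2) (Q → ZMod 2) ℂ

def supp (v : Q → ZMod 2) : Finset Q := Finset.univ.filter (fun q => v q = 1)

def ind (α : Finset Q) : Q → ZMod 2 := fun q => if q ∈ α then 1 else 0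

def XM (α : Finset Q) : M Q :=
  Matrix.of fun u v => if u = v + ind α then (1 : ℂ) else 0

noncomputable def ZM (α : Finset Q) : M Q :=
  Matrix.diagonal fun v => (-1 : ℂ) ^ (supp v ∩ α).card

noncomputable def AM (b : Q → ℤ) (α : Finset Q) : M Q :=
  Matrix.diagonal fun v => Complex.I ^ (g b (α ∩ supp v))

noncomputable def UM (b : Q → ℤ) : M Q :=
  Matrix.diagonal fun v => Complex.exp (Real.pi * Complex.I / 4) ^ (g b (supp v))

def Encoded (C : CSS Q) (ρ : M Q) : Prop :=
  ρ.trace = 1 ∧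
  (∀ c ∈ C.SX, XM c * ρ = ρ ∧ ρ * XM c = ρ) ∧
  (∀ f ∈ C.SZ, ZM f * ρ = ρ ∧ ρ * ZM f = ρ)

instance : Std.Commutative (α := Finset Q) (· ∆ ·) := ⟨symmDiff_comm⟩
instance : Std.Associative (α := Finset Q) (· ∆ ·) := ⟨symmDiff_assoc⟩

/-- Iterated symmetric difference over a finite index set. -/
def bigΔ {ι : Type*} (s : Finset ι) (f : ι → Finset Q) : Finset Q :=
  s.fold (· ∆ ·) ∅ f

end CC

/-! Every `X`-cycle is a stabilizer or differs from the logical `λ` by one, and by the duality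
and intersection axioms a stabilizer meets every `X`-cycle in an element of `S_Z`. Hence
`α ∩ β` lies in `S_Z` or in `(λ ∩ β) + S_Z`, and `λ ∩ β` in `S_Z` or in `λ + S_Z`, so the
intersection axiom puts `Z_Z(S)` inside `⟨S_Z, λ⟩ ⊆ G_λ ⊆ Z_Z(S)`. -/

theorem Finset.card_symmDiff_add_two_mul_card_inter {α : Type*} [DecidableEq α]
    (s t : Finset α) : #(s ∆ t) + 2 * #(s ∩ t) = #s + #t := by
  rw [symmDiff_eq_sup_sdiff_inf, sup_eq_union, inf_eq_inter,
    card_sdiff_of_subset inter_subset_union, ← card_union_add_card_inter]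
  have := card_le_card (inter_subset_union (s := s) (t := t))
  omega

theorem Finset.even_card_symmDiff_inter {α : Type*} [DecidableEq α] {s t u : Finset α}
    (hs : 2 ∣ #(s ∩ u)) (ht : 2 ∣ #(t ∩ u)) : 2 ∣ #((s ∆ t) ∩ u) := by
  have := card_symmDiff_add_two_mul_card_inter (s ∩ u) (t ∩ u)
  rw [show (s ∆ t) ∩ u = (s ∩ u) ∆ (t ∩ u) from inf_symmDiff_distrib_right s t u]
  omega

namespace CC

section Closure

variable {Q : Type*} [DecidableEq Q]

theorem isSubgroup_closure (T : Set (Finset Q)) : IsSubgroup (closure T) :=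
  ⟨fun _ hS => hS.1.1, fun _ ha _ hb S hS => hS.1.2 _ (ha S hS) _ (hb S hS)⟩

theorem subset_closure (T : Set (Finset Q)) : T ⊆ closure T :=
  fun _ hx _ hS => hS.2 hx

theorem closure_subset {T S : Set (Finset Q)} (hS : IsSubgroup S) (h : T ⊆ S) :
    closure T ⊆ S :=
  fun _ hx => hx S ⟨hS, h⟩

theorem closure_mono {T T' : Set (Finset Q)} (h : T ⊆ T') : closure T ⊆ closure T' :=
  closure_subset (isSubgroup_closure T') (h.trans (subset_closure T'))

theorem symmDiff_mem_closure {T : Set (Finset Q)} {a b : Finset Q}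
    (ha : a ∈ closure T) (hb : b ∈ closure T) : a ∆ b ∈ closure T :=
  (isSubgroup_closure T).2 a ha b hb

end Closure

variable {Q : Type*} [Fintype Q] [DecidableEq Q]

theorem isSubgroup_ZZ (C : CSS Q) : IsSubgroup (ZZ C) :=
  ⟨fun c _ => by simp, fun _ ha _ hb c hc => even_card_symmDiff_inter (ha c hc) (hb c hc)⟩

theorem SZ_subset_ZZ (C : CSS Q) : C.SZ ⊆ ZZ C :=
  C.comm

theorem inter_mem_ZZ {C : CSS Q} (hinter : Inter C) {α β : Finset Q}
    (hα : α ∈ ZX C) (hβ : β ∈ ZX C) : α ∩ β ∈ ZZ C := by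
  rw [hinter]
  exact ⟨α, hα, β, hβ, rfl⟩

theorem inter_mem_SZ_of_mem_SX {C : CSS Q} (hdual : Dual C) (hinter : Inter C)
    {s γ : Finset Q} (hs : s ∈ C.SX) (hγ : γ ∈ ZX C) : s ∩ γ ∈ C.SZ := by
  rw [hdual.1]
  intro δ hδ
  rw [inter_assoc, inter_comm]
  exact inter_mem_ZZ hinter hγ hδ s hs

theorem mem_SX_or_symmDiff_mem_SX {C : CSS Q} (hsingle : SingleQubit C) {α l : Finset Q}
    (hα : α ∈ ZX C) (hl : LogicalX C l) : α ∈ C.SX ∨ α ∆ l ∈ C.SX := by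
  by_cases h : α ∈ C.SX
  · exact .inl h
  · exact .inr (hsingle.1.2 α l ⟨hα, h⟩ hl)

theorem inter_mem_closure_logicalX {C : CSS Q} (hdual : Dual C) (hsingle : SingleQubit C)
    (hinter : Inter C) {l α β : Finset Q} (hl : LogicalX C l) (hα : α ∈ ZX C)
    (hβ : β ∈ ZX C) : α ∩ β ∈ closure (C.SZ ∪ {l}) := by
  have hSZ {s γ : Finset Q} (hs : s ∈ C.SX) (hγ : γ ∈ ZX C) : s ∩ γ ∈ closure (C.SZ ∪ {l}) :=
    subset_closure _ (.inl (inter_mem_SZ_of_mem_SX hdual hinter hs hγ))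
  have hlβ : l ∩ β ∈ closure (C.SZ ∪ {l}) := by
    rcases mem_SX_or_symmDiff_mem_SX hsingle hβ hl with hβS | hβl
    · rw [inter_comm]
      exact hSZ hβS hl.1
    · have : l ∩ β = l ∆ ((β ∆ l) ∩ l) := by
        ext; simp only [mem_symmDiff, mem_inter]; tauto
      rw [this]
      exact symmDiff_mem_closure (subset_closure _ (.inr rfl)) (hSZ hβl hl.1)
  rcases mem_SX_or_symmDiff_mem_SX hsingle hα hl with hαS | hαl
  · exact hSZ hαS hβ
  · have : α ∩ β = (l ∩ β) ∆ ((α ∆ l) ∩ β) := by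
      ext; simp only [mem_symmDiff, mem_inter]; tauto
    rw [this]
    exact symmDiff_mem_closure hlβ (hSZ hαl hβ)

theorem H_eq_SZ {C : CSS Q} (hdual : Dual C) (hinter : Inter C) {α : Finset Q}
    (hα : α ∈ ZX C) : H C α = C.SZ := by
  refine (closure_subset C.hSZ ?_).antisymm (Set.subset_union_left.trans (subset_closure _))
  rintro _ (hx | ⟨β, hβ, rfl⟩)
  · exact hx
  · rw [inter_comm]
    exact inter_mem_SZ_of_mem_SX hdual hinter hβ hα

theorem G_subset_ZZ {C : CSS Q} (hinter : Inter C) {α : Finset Q} (hα : α ∈ ZX C) :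
    G C α ⊆ ZZ C := by
  refine closure_subset (isSubgroup_ZZ C) ?_
  rintro _ (hx | ⟨β, hβ, rfl⟩)
  · exact SZ_subset_ZZ C hx
  · exact inter_mem_ZZ hinter hα hβ

theorem closure_SZ_insert_subset_G (C : CSS Q) {l : Finset Q} (hl : l ∈ ZX C) :
    closure (C.SZ ∪ {l}) ⊆ G C l :=
  closure_mono <| Set.union_subset_union_right _ <|
    Set.singleton_subset_iff.mpr ⟨l, hl, (inter_self l).symm⟩

theorem ZZ_subset_closure_SZ_insert {C : CSS Q} (hdual : Dual C) (hsingle : SingleQubit C)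
    (hinter : Inter C) {l : Finset Q} (hl : LogicalX C l) :
    ZZ C ⊆ closure (C.SZ ∪ {l}) := by
  rw [hinter]
  rintro _ ⟨α, hα, β, hβ, rfl⟩
  exact inter_mem_closure_logicalX hdual hsingle hinter hl hα hβ

/-- Lemma A0: `H_α = S_Z` for undetectable `α`, and for logical `λ`,
`G_λ = Z_Z(S) = ⟨S_Z, λ⟩`. -/
theorem H_eq_SZ_and_G_logical
    (C : CSS Q) (hdual : Dual C) (hsingle : SingleQubit C) (hinter : Inter C) :
    (∀ α ∈ ZX C, H C α = C.SZ) ∧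
    (∀ l, LogicalX C l → G C l = ZZ C ∧ ZZ C = closure (C.SZ ∪ {l})) := by
  refine ⟨fun α hα => H_eq_SZ hdual hinter hα, fun l hl => ?_⟩
  have hGZ := G_subset_ZZ hinter hl.1
  have hZK := ZZ_subset_closure_SZ_insert hdual hsingle hinter hl
  have hKG := closure_SZ_insert_subset_G C hl.1
  exact ⟨hGZ.antisymm (hZK.trans hKG), hZK.antisymm (hKG.trans hGZ)⟩

end CC
end

section
/- For all α, β : Finset Q, the matrix identity X_β · A_α · X_β = i^{g(α ∩ β)} · Z_{α ∩ β} · A_α holds in M, provided b q is odd for every q ∈ Q. (The key commutation relation between X-type Pauli operators and the diagonal phase operator A_α induced by the transversal T gate.) -/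
open Finset
open scoped symmDiff Matrix

namespace CC

variable {Q : Type*} [Fintype Q] [DecidableEq Q]

/-! Conjugation by the permutation matrix `X_β` shifts the diagonal of `A_α` by `ind β`,
i.e. replaces `supp v` by `supp v ∆ β`. Since `g (x ∆ y) = g x + g y - 2 g (x ∩ y)` and
`i⁻² = -1`, the phase acquires the factor `(-1) ^ g (x ∩ y)`, which is `(-1) ^ |x ∩ y|`
because every `b q` is odd. -/

omit [Fintype Q] in
theorem add_ind_involutive (β : Finset Q) : Function.Involutive (· + ind β) := fun v =>
  funext fun q => by simp only [Pi.add_apply, add_assoc, CharTwo.add_self_eq_zero, add_zero]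

theorem XM_eq_toMatrix (β : Finset Q) :
    XM β = ((add_ind_involutive β).toPerm _).toPEquiv.toMatrix := by
  ext u v
  simp only [XM, Matrix.of_apply, PEquiv.toMatrix_apply, Equiv.toPEquiv_apply,
    Function.Involutive.coe_toPerm, Option.mem_some_iff, (add_ind_involutive β).eq_iff]

theorem XM_mul_diagonal_mul_XM (β : Finset Q) (d : (Q → ZMod 2) → ℂ) :
    XM β * Matrix.diagonal d * XM β = Matrix.diagonal fun v => d (v + ind β) := by
  rw [XM_eq_toMatrix, PEquiv.toMatrix_toPEquiv_mul, PEquiv.mul_toMatrix_toPEquiv,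
    Matrix.submatrix_submatrix, Function.Involutive.toPerm_symm]
  exact Matrix.submatrix_diagonal_equiv d _

theorem supp_add_ind (v : Q → ZMod 2) (β : Finset Q) : supp (v + ind β) = supp v ∆ β := by
  have add_one_eq_one : ∀ x : ZMod 2, x + 1 = 1 ↔ ¬x = 1 := by decide
  ext q
  simp only [supp, mem_filter, mem_univ, true_and, mem_symmDiff]
  by_cases hq : q ∈ β <;> simp [ind, hq, add_one_eq_one]

omit [Fintype Q] in
theorem g_symmDiff (b : Q → ℤ) (x y : Finset Q) :
    g b (x ∆ y) = g b x + g b y - 2 * g b (x ∩ y) := by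
  have union_add_inter := sum_union_inter (s₁ := x) (s₂ := y) (f := b)
  simp only [g, symmDiff_eq_sup_sdiff_inf, sup_eq_union, inf_eq_inter,
    sum_sdiff_eq_sub inter_subset_union]
  omega

omit [Fintype Q] in
theorem neg_one_zpow_g {K : Type*} [DivisionRing K] {b : Q → ℤ} (hb : ∀ q, Odd (b q))
    (s : Finset Q) : (-1 : K) ^ g b s = (-1) ^ s.card := by
  induction s using Finset.induction with
  | empty => simp [g]
  | insert q s hq ih =>
    rw [card_insert_of_notMem hq, g, sum_insert hq, zpow_add₀ (neg_ne_zero.mpr one_ne_zero),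
      (hb q).neg_one_zpow, ← g, ih, pow_succ, neg_one_mul, mul_neg_one]

omit [Fintype Q] in
theorem I_zpow_g_symmDiff {b : Q → ℤ} (hb : ∀ q, Odd (b q)) (x y : Finset Q) :
    Complex.I ^ g b (x ∆ y) = Complex.I ^ g b x * Complex.I ^ g b y * (-1) ^ (x ∩ y).card := by
  have I_zpow_neg_two : Complex.I ^ (-2 : ℤ) = -1 := by
    rw [zpow_neg, zpow_two, Complex.I_mul_I, inv_neg, inv_one]
  rw [g_symmDiff, sub_eq_add_neg, ← neg_mul, zpow_add₀ Complex.I_ne_zero,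
    zpow_add₀ Complex.I_ne_zero, zpow_mul, I_zpow_neg_two, neg_one_zpow_g hb]

/-- The key commutation relation between `X`-type Pauli operators and the diagonal phase
operator `A_α` induced by the transversal T gate:
`X_β · A_α · X_β = i^{g(α ∩ β)} · Z_{α ∩ β} · A_α`. -/
theorem X_A_commutation
    (b : Q → ℤ) (hb : ∀ q, Odd (b q)) (α β : Finset Q) :
    XM β * AM b α * XM β
      = (Complex.I ^ (g b (α ∩ β))) • (ZM (α ∩ β) * AM b α) := by
  rw [AM, ZM, XM_mul_diagonal_mul_XM, Matrix.diagonal_mul_diagonal, ← Matrix.diagonal_smul]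
  congr 1
  funext v
  rw [Pi.smul_apply, smul_eq_mul, supp_add_ind, ← inf_eq_inter, inf_symmDiff_distrib_left,
    inf_eq_inter, inf_eq_inter, I_zpow_g_symmDiff hb, ← inter_inter_distrib_left, inter_left_comm]
  ring

end CC
end

section
/- Let (S_X, S_Z) be a CSS stabilizer code on a finite type Q satisfying the duality and intersection assumptions and the T-invariance assumption, and let P_0 := (1/|S_Z|) · Σ_{f ∈ S_Z} Z_f. Then for every α : Finset Q, the matrix A_α† · P_0 lies in the ℂ-linear span of {Z_z | z ∈ E_α}. (Lemma A3.) -/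
open Finset
open scoped symmDiff Matrix

namespace CC

variable {Q : Type*} [Fintype Q] [DecidableEq Q]

/-!
`P₀` is the diagonal projector onto the basis states `v` with `supp v ∈ Z_X`, so `A_α† P₀` is
diagonal with entries `φ(supp v)`, where `φ(s) = i^{-g(α ∩ s)}` on `Z_X` and `0` off it, and its
Walsh expansion writes it as `∑_z φ̂(z) Z_z`. For `γ ∈ Z(G_α)` we have `γ ∈ Z_X`, and for
`s ∈ Z_X` the set `α ∩ s` lies in `G_α`, so `|α ∩ s ∩ γ|` is even; as every `b q` is odd,
`g(α ∩ s ∩ γ)` is even too and `φ(s ∆ γ) = i^{-g(α ∩ γ)} φ(s)`. Translating the Walsh sum by `γ`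
gives `φ̂(z) = i^{-g(α ∩ γ)} (-1)^{|γ ∩ z|} φ̂(z)`, so `φ̂(z) ≠ 0` forces
`g(γ ∩ α) ≡ 2|z ∩ γ| (mod 4)`, i.e. `z ∈ E_α`.
-/

lemma sum_symmDiff_add_two_nsmul_sum_inter {ι M : Type*} [DecidableEq ι] [AddCommMonoid M]
    (f : ι → M) (s t : Finset ι) :
    ∑ i ∈ s ∆ t, f i + 2 • ∑ i ∈ s ∩ t, f i = ∑ i ∈ s, f i + ∑ i ∈ t, f i := by
  have hdisj : Disjoint (s ∆ t) (s ∩ t) := disjoint_symmDiff_inf s t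
  rw [two_nsmul, ← add_assoc, ← sum_union hdisj,
    show s ∆ t ∪ s ∩ t = s ∪ t from symmDiff_sup_inf s t, sum_union_inter]

lemma neg_one_pow_card_symmDiff {ι R : Type*} [DecidableEq ι] [Monoid R] [HasDistribNeg R]
    (s t : Finset ι) : (-1 : R) ^ (s ∆ t).card = (-1) ^ s.card * (-1) ^ t.card := by
  have h := sum_symmDiff_add_two_nsmul_sum_inter (fun _ => 1) s t
  simp only [sum_const, smul_eq_mul, mul_one] at h
  rw [← pow_add, ← h, pow_add, pow_mul, neg_one_sq, one_pow, mul_one]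

lemma neg_one_pow_card_symmDiff_inter {ι R : Type*} [DecidableEq ι] [Monoid R] [HasDistribNeg R]
    (s t z : Finset ι) :
    (-1 : R) ^ ((s ∆ t) ∩ z).card = (-1) ^ (s ∩ z).card * (-1) ^ (t ∩ z).card := by
  rw [show (s ∆ t) ∩ z = (s ∩ z) ∆ (t ∩ z) from inf_symmDiff_distrib_right s t z,
    neg_one_pow_card_symmDiff]

lemma symmDiff_mem_Zof {ι : Type*} [DecidableEq ι] {K : Set (Finset ι)} {s t : Finset ι}
    (hs : s ∈ Zof K) (ht : t ∈ Zof K) : s ∆ t ∈ Zof K := by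
  intro h hh
  have key := sum_symmDiff_add_two_nsmul_sum_inter (fun _ => 1) (s ∩ h) (t ∩ h)
  simp only [sum_const, smul_eq_mul, mul_one] at key
  rw [show (s ∩ h) ∆ (t ∩ h) = (s ∆ t) ∩ h from (inf_symmDiff_distrib_right s t h).symm] at key
  have hsh := hs h hh
  have hth := ht h hh
  omega

lemma sum_neg_one_pow_card_inter_eq_zero {ι : Type*} [DecidableEq ι] {S : Finset (Finset ι)}
    (hS : ∀ a ∈ S, ∀ b ∈ S, a ∆ b ∈ S) {s f₀ : Finset ι} (hf₀ : f₀ ∈ S)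
    (hodd : Odd (s ∩ f₀).card) : ∑ f ∈ S, (-1 : ℂ) ^ (s ∩ f).card = 0 := by
  have hshift : ∑ f ∈ S, (-1 : ℂ) ^ (s ∩ f).card = ∑ f ∈ S, (-1 : ℂ) ^ (s ∩ (f ∆ f₀)).card :=
    sum_nbij' (· ∆ f₀) (· ∆ f₀) (fun f hf => hS f hf f₀ hf₀) (fun f hf => hS f hf f₀ hf₀)
      (fun f _ => symmDiff_symmDiff_cancel_right f₀ f)
      (fun f _ => symmDiff_symmDiff_cancel_right f₀ f)
      (fun f _ => by rw [symmDiff_symmDiff_cancel_right])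
  have hflip : ∑ f ∈ S, (-1 : ℂ) ^ (s ∩ (f ∆ f₀)).card = -∑ f ∈ S, (-1 : ℂ) ^ (s ∩ f).card := by
    rw [← sum_neg_distrib]
    refine sum_congr rfl fun f _ => ?_
    rw [show s ∩ (f ∆ f₀) = (s ∩ f) ∆ (s ∩ f₀) from inf_symmDiff_distrib_left s f f₀,
      neg_one_pow_card_symmDiff, hodd.neg_one_pow, mul_neg_one]
  linear_combination (hshift.trans hflip) / 2

lemma sum_neg_one_pow_card_inter_univ (s : Finset Q) :
    ∑ z : Finset Q, (-1 : ℂ) ^ (s ∩ z).card = if s = ∅ then 2 ^ Fintype.card Q else 0 := by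
  split_ifs with hs
  · simp [hs, Fintype.card_finset]
  · obtain ⟨q, hq⟩ := nonempty_iff_ne_empty.2 hs
    exact sum_neg_one_pow_card_inter_eq_zero (fun _ _ _ _ => mem_univ _) (mem_univ {q})
      (by simp [inter_singleton_of_mem hq])

lemma sum_neg_one_pow_card_inter_of_isSubgroup {S : Set (Finset Q)} (hS : IsSubgroup S)
    (s : Finset Q) :
    ∑ f ∈ (Set.toFinite S).toFinset, (-1 : ℂ) ^ (s ∩ f).card =
      (Zof S).indicator (fun _ => ((Set.toFinite S).toFinset.card : ℂ)) s := by
  by_cases hs : s ∈ Zof S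
  · rw [Set.indicator_of_mem hs, card_eq_sum_ones, Nat.cast_sum, Nat.cast_one]
    exact sum_congr rfl fun f hf =>
      Even.neg_one_pow (even_iff_two_dvd.2 (hs f (by simpa using hf)))
  · rw [Set.indicator_of_notMem hs]
    obtain ⟨f₀, hf₀, hodd⟩ : ∃ f₀ ∈ S, ¬ 2 ∣ (s ∩ f₀).card := by simpa [Zof] using hs
    exact sum_neg_one_pow_card_inter_eq_zero (by simpa using hS.2) (by simpa using hf₀)
      (Nat.odd_iff.2 (Nat.two_dvd_ne_zero.1 hodd))

noncomputable def walshCoeff (φ : Finset Q → ℂ) (z : Finset Q) : ℂ :=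
  (2 ^ Fintype.card Q : ℂ)⁻¹ * ∑ s, φ s * (-1) ^ (s ∩ z).card

lemma sum_walshCoeff_mul (φ : Finset Q → ℂ) (t : Finset Q) :
    ∑ z, walshCoeff φ z * (-1) ^ (t ∩ z).card = φ t := by
  calc ∑ z, walshCoeff φ z * (-1) ^ (t ∩ z).card
      = (2 ^ Fintype.card Q : ℂ)⁻¹ * ∑ s, φ s * ∑ z, (-1 : ℂ) ^ ((s ∆ t) ∩ z).card := by
        simp only [walshCoeff, neg_one_pow_card_symmDiff_inter, mul_sum, sum_mul, mul_assoc]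
        exact sum_comm
    _ = (2 ^ Fintype.card Q : ℂ)⁻¹ * (φ t * 2 ^ Fintype.card Q) := by
        simp only [sum_neg_one_pow_card_inter_univ, symmDiff_eq_empty, mul_ite, mul_zero,
          sum_ite_eq', mem_univ, if_true]
    _ = φ t := by field_simp

lemma mul_neg_one_pow_eq_one_of_walshCoeff_ne_zero {φ : Finset Q → ℂ} {γ z : Finset Q} {c : ℂ}
    (hφ : ∀ s, φ (s ∆ γ) = c * φ s) (hz : walshCoeff φ z ≠ 0) :
    c * (-1) ^ (γ ∩ z).card = 1 := by
  have hsum : ∑ s, φ s * (-1 : ℂ) ^ (s ∩ z).card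
      = c * (-1) ^ (γ ∩ z).card * ∑ s, φ s * (-1 : ℂ) ^ (s ∩ z).card := by
    refine (Equiv.sum_comp (symmDiff_left_involutive γ).toPerm _).symm.trans ?_
    rw [mul_sum]
    refine sum_congr rfl fun s _ => ?_
    simp only [Function.Involutive.coe_toPerm, hφ, neg_one_pow_card_symmDiff_inter]
    ring
  have hcoeff : walshCoeff φ z = c * (-1) ^ (γ ∩ z).card * walshCoeff φ z := by
    simp only [walshCoeff]
    linear_combination (2 ^ Fintype.card Q : ℂ)⁻¹ * hsum
  exact (mul_eq_right₀ hz).1 hcoeff.symm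

lemma sum_smul_ZM_eq_diagonal (s : Finset (Finset Q)) (c : Finset Q → ℂ) :
    ∑ z ∈ s, c z • ZM z = Matrix.diagonal fun v => ∑ z ∈ s, c z * (-1) ^ (supp v ∩ z).card := by
  ext u v
  by_cases huv : u = v
  · subst huv
    simp [ZM, Matrix.sum_apply]
  · simp [ZM, Matrix.sum_apply, huv]

lemma diagonal_comp_supp_eq_sum_walshCoeff_smul (φ : Finset Q → ℂ) :
    Matrix.diagonal (fun v => φ (supp v)) = ∑ z, walshCoeff φ z • ZM z := by
  simp only [sum_smul_ZM_eq_diagonal, sum_walshCoeff_mul]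

lemma smul_sum_ZM_eq_diagonal {S : Set (Finset Q)} (hS : IsSubgroup S) :
    ((Set.toFinite S).toFinset.card : ℂ)⁻¹ • ∑ f ∈ (Set.toFinite S).toFinset, ZM f =
      Matrix.diagonal fun v => (Zof S).indicator 1 (supp v) := by
  have hcard : ((Set.toFinite S).toFinset.card : ℂ) ≠ 0 := by
    simpa using (Set.nonempty_of_mem hS.1).ne_empty
  rw [smul_sum, sum_smul_ZM_eq_diagonal]
  congr 1
  funext v
  rw [← mul_sum, sum_neg_one_pow_card_inter_of_isSubgroup hS]
  by_cases hv : supp v ∈ Zof S <;> simp [hv, hcard]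

lemma I_zpow_eq_I_zpow_iff {m n : ℤ} : Complex.I ^ m = Complex.I ^ n ↔ m ≡ n [ZMOD 4] := by
  rw [eq_comm, ← div_eq_one_iff_eq (zpow_ne_zero _ Complex.I_ne_zero),
    ← zpow_sub₀ Complex.I_ne_zero, Complex.isPrimitiveRoot_I.zpow_eq_one_iff_dvd, Int.modEq_iff_dvd]
  rfl

lemma even_g_of_even_card {ι : Type*} {b : ι → ℤ} (hb : ∀ i, Odd (b i)) {t : Finset ι}
    (ht : Even t.card) : Even (g b t) := by
  have hsub : Even (g b t - t.card) := by
    rw [g, card_eq_sum_ones, Nat.cast_sum, ← sum_sub_distrib]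
    exact even_iff_two_dvd.2 (dvd_sum fun i _ => even_iff_two_dvd.1 ((hb i).sub_odd odd_one))
  simpa using hsub.add ht.natCast

lemma I_zpow_g_symmDiff_s16 {ι : Type*} [DecidableEq ι] {b : ι → ℤ} (hb : ∀ i, Odd (b i))
    {s t : Finset ι} (hst : Even (s ∩ t).card) :
    Complex.I ^ g b (s ∆ t) = Complex.I ^ g b s * Complex.I ^ g b t := by
  obtain ⟨k, hk⟩ := even_g_of_even_card hb hst
  have hsum := sum_symmDiff_add_two_nsmul_sum_inter b s t
  rw [← g, ← g, ← g, ← g, hk, nsmul_eq_mul, Nat.cast_ofNat] at hsum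
  rw [← zpow_add₀ Complex.I_ne_zero, I_zpow_eq_I_zpow_iff, Int.modEq_iff_dvd]
  exact ⟨k, by linarith⟩

lemma mem_G_of_mem_SZ {C : CSS Q} {α f : Finset Q} (hf : f ∈ C.SZ) : f ∈ G C α :=
  fun _ hS => hS.2 (Or.inl hf)

lemma inter_mem_G {C : CSS Q} {α β : Finset Q} (hβ : β ∈ ZX C) : α ∩ β ∈ G C α :=
  fun _ hS => hS.2 (Or.inr ⟨β, hβ, rfl⟩)

noncomputable def phaseZX (C : CSS Q) (b : Q → ℤ) (α : Finset Q) : Finset Q → ℂ :=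
  (ZX C).indicator fun s => (Complex.I ^ g b (α ∩ s))⁻¹

lemma conjTranspose_AM_mul_smul_sum_ZM (C : CSS Q) (b : Q → ℤ) (α : Finset Q) :
    (AM b α)ᴴ * (((Set.toFinite C.SZ).toFinset.card : ℂ)⁻¹ •
        ∑ f ∈ (Set.toFinite C.SZ).toFinset, ZM f) =
      Matrix.diagonal fun v => phaseZX C b α (supp v) := by
  rw [smul_sum_ZM_eq_diagonal C.hSZ, AM, Matrix.diagonal_conjTranspose,
    Matrix.diagonal_mul_diagonal]
  congr 1
  funext v
  change _ = (Zof C.SZ).indicator _ _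
  by_cases hv : supp v ∈ Zof C.SZ
  · simp [hv, ← Complex.inv_I]
  · simp [hv]

lemma phaseZX_symmDiff (C : CSS Q) {b : Q → ℤ} (hb : ∀ q, Odd (b q)) (α : Finset Q)
    {γ : Finset Q} (hγ : γ ∈ Zof (G C α)) (s : Finset Q) :
    phaseZX C b α (s ∆ γ) = (Complex.I ^ g b (α ∩ γ))⁻¹ * phaseZX C b α s := by
  have hγX : γ ∈ ZX C := fun f hf => hγ f (mem_G_of_mem_SZ hf)
  by_cases hs : s ∈ ZX C
  · have heven : Even ((α ∩ s) ∩ (α ∩ γ)).card := by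
      rw [show (α ∩ s) ∩ (α ∩ γ) = γ ∩ (α ∩ s) by ext; simp only [mem_inter]; tauto]
      exact even_iff_two_dvd.2 (hγ _ (inter_mem_G hs))
    have hsγ : s ∆ γ ∈ ZX C := symmDiff_mem_Zof hs hγX
    rw [phaseZX, Set.indicator_of_mem hsγ, Set.indicator_of_mem hs,
      show α ∩ (s ∆ γ) = (α ∩ s) ∆ (α ∩ γ) from inf_symmDiff_distrib_left α s γ,
      I_zpow_g_symmDiff_s16 hb heven, mul_inv, mul_comm]
  · have hsγ : s ∆ γ ∉ ZX C := fun h => by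
      have h' : (s ∆ γ) ∆ γ ∈ ZX C := symmDiff_mem_Zof h hγX
      exact hs (by rwa [symmDiff_symmDiff_cancel_right] at h')
    simp [phaseZX, Set.indicator_of_notMem hs, Set.indicator_of_notMem hsγ]

lemma mem_E_of_walshCoeff_phaseZX_ne_zero (C : CSS Q) {b : Q → ℤ} (hb : ∀ q, Odd (b q))
    (α : Finset Q) {z : Finset Q} (hz : walshCoeff (phaseZX C b α) z ≠ 0) : z ∈ E C b α := by
  intro γ hγ
  have h := mul_neg_one_pow_eq_one_of_walshCoeff_ne_zero (phaseZX_symmDiff C hb α hγ) hz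
  rw [inv_mul_eq_one₀ (zpow_ne_zero _ Complex.I_ne_zero), ← Complex.I_sq, ← pow_mul,
    ← zpow_natCast, I_zpow_eq_I_zpow_iff] at h
  rw [inter_comm γ α, inter_comm z γ]
  simpa [mul_comm] using h

theorem A_dagger_P0_mem_span_general
    (C : CSS Q) (b : Q → ℤ) (hb : ∀ q, Odd (b q))
    (α : Finset Q) :
    (AM b α)ᴴ *
        ((((Set.toFinite C.SZ).toFinset.card : ℂ))⁻¹ •
          ∑ f ∈ (Set.toFinite C.SZ).toFinset, ZM f)
      ∈ Submodule.span ℂ {m : M Q | ∃ z ∈ E C b α, m = ZM z} := by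
  rw [conjTranspose_AM_mul_smul_sum_ZM, diagonal_comp_supp_eq_sum_walshCoeff_smul]
  refine Submodule.sum_mem _ fun z _ => ?_
  by_cases hz : walshCoeff (phaseZX C b α) z = 0
  · simp [hz]
  · exact Submodule.smul_mem _ _
      (Submodule.subset_span ⟨z, mem_E_of_walshCoeff_phaseZX_ne_zero C hb α hz, rfl⟩)

/-- Lemma A3: `A_α† · P_0` lies in the linear span of `{Z_z | z ∈ E_α}`. -/
theorem A_dagger_P0_mem_span
    (C : CSS Q) (b : Q → ℤ) (hb : ∀ q, Odd (b q))
    (hdual : Dual C) (hinter : Inter C) (htinv : TInv C b)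
    (α : Finset Q) :
    (AM b α)ᴴ *
        ((((Set.toFinite C.SZ).toFinset.card : ℂ))⁻¹ •
          ∑ f ∈ (Set.toFinite C.SZ).toFinset, ZM f)
      ∈ Submodule.span ℂ {m : M Q | ∃ z ∈ E C b α, m = ZM z} :=
  A_dagger_P0_mem_span_general C b hb α

end CC
end
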